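/- For every finite simple graph G, χ_NL(μ(G)) ≤ χ_NL(G) + 1, where μ(G) is the Mycielski graph of G. -/

import Mathlib

open SimpleGraph

/-- A coloring `c : V → Fin k` is a *neighbor-locating coloring* of `G` if it is proper and
any two distinct vertices with the same color have different sets of colors on their
open neighborhoods. -/
def IsNLColoring {V : Type*} (G : SimpleGraph V) {k : ℕ} (c : V → Fin k) : Prop :=
  (∀ u v : V, G.Adj u v → c u ≠ c v) ∧
  ∀ u v : V, u ≠ v → c u = c v → c '' (G.neighborSet u) ≠ c '' (G.neighborSet v)

/-- The neighbor-locating chromatic number: the least `k` admitting an NL-coloring. -/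
noncomputable def nlChromaticNumber {V : Type*} (G : SimpleGraph V) : ℕ :=
  sInf {k : ℕ | ∃ c : V → Fin k, IsNLColoring G c}

set_option linter.unreachableTactic false in
set_option linter.unusedTactic false in
/-- The Mycielski graph of `G`: vertices `v_a = Sum.inl a`, shadow vertices
`u_a = Sum.inr (Sum.inl a)` and the apex `w = Sum.inr (Sum.inr ())`. -/
def mycielskian {α : Type*} (G : SimpleGraph α) : SimpleGraph (α ⊕ α ⊕ Unit) where
  Adj x y :=
    match x, y with
    | Sum.inl a, Sum.inl b => G.Adj a b
    | Sum.inl a, Sum.inr (Sum.inl b) => G.Adj a b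
    | Sum.inr (Sum.inl a), Sum.inl b => G.Adj a b
    | Sum.inr (Sum.inl _), Sum.inr (Sum.inr _) => True
    | Sum.inr (Sum.inr _), Sum.inr (Sum.inl _) => True
    | _, _ => False
  symm := by
    constructor
    rintro (a | a | a) (b | b | b) h <;>
      first | exact G.symm h | exact G.adj_symm h | trivial | exact h.elim
  loopless := by
    constructor
    rintro (a | a | a) h <;> first | exact G.loopless _ h | exact G.irrefl h | exact h.elim

/-!
Let `c` be an optimal neighbor-locating coloring of `G`. Give `v_a` and its shadow `u_a` the
color `c a`, and the apex `w` a new color. The colors seen from `v_a` are exactly the colors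
`c` sees from `a`, while `u_a` sees those plus the new color; so two vertices of equal color
are told apart either by the new color or, if both are originals or both are shadows, by `c`.
-/

section NLColoring

variable {V : Type*} {G : SimpleGraph V} {k : ℕ}

theorem isNLColoring_of_injective {c : V → Fin k} (hc : Function.Injective c) :
    IsNLColoring G c :=
  ⟨fun _ _ h he => G.ne_of_adj h (hc he), fun _ _ huv he => absurd (hc he) huv⟩

theorem nlChromaticNumber_le_of_isNLColoring {c : V → Fin k} (hc : IsNLColoring G c) :
    nlChromaticNumber G ≤ k :=
  Nat.sInf_le ⟨c, hc⟩

theorem exists_isNLColoring_nlChromaticNumber [Finite V] (G : SimpleGraph V) :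
    ∃ c : V → Fin (nlChromaticNumber G), IsNLColoring G c := by
  obtain ⟨n, ⟨e⟩⟩ := Finite.exists_equiv_fin V
  exact Nat.sInf_mem (s := {k | ∃ c : V → Fin k, IsNLColoring G c})
    ⟨n, e, isNLColoring_of_injective e.injective⟩

end NLColoring

namespace Mycielskian

variable {α : Type*} {G : SimpleGraph α} {k : ℕ}

def coloring (c : α → Fin k) : α ⊕ α ⊕ Unit → Fin (k + 1) :=
  Sum.elim (Fin.castSucc ∘ c) (Sum.elim (Fin.castSucc ∘ c) fun _ => Fin.last k)

variable (c : α → Fin k)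

@[simp] theorem coloring_inl (a : α) : coloring c (.inl a) = (c a).castSucc := rfl

@[simp] theorem coloring_shadow (a : α) : coloring c (.inr (.inl a)) = (c a).castSucc := rfl

@[simp] theorem coloring_apex (u : Unit) : coloring c (.inr (.inr u)) = Fin.last k := rfl

theorem coloring_image_neighborSet_inl (a : α) :
    coloring c '' (mycielskian G).neighborSet (.inl a) =
      Fin.castSucc '' (c '' G.neighborSet a) := by
  ext x
  constructor
  · rintro ⟨(b | b | u), hb, rfl⟩
    · exact ⟨c b, ⟨b, hb, rfl⟩, rfl⟩
    · exact ⟨c b, ⟨b, hb, rfl⟩, rfl⟩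
    · exact hb.elim
  · rintro ⟨-, ⟨b, hb, rfl⟩, rfl⟩
    exact ⟨.inl b, hb, rfl⟩

theorem coloring_image_neighborSet_shadow (a : α) :
    coloring c '' (mycielskian G).neighborSet (.inr (.inl a)) =
      insert (Fin.last k) (Fin.castSucc '' (c '' G.neighborSet a)) := by
  ext x
  constructor
  · rintro ⟨(b | b | u), hb, rfl⟩
    · exact .inr ⟨c b, ⟨b, hb, rfl⟩, rfl⟩
    · exact hb.elim
    · exact .inl rfl
  · rintro (rfl | ⟨-, ⟨b, hb, rfl⟩, rfl⟩)
    · exact ⟨.inr (.inr ()), trivial, rfl⟩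
    · exact ⟨.inl b, hb, rfl⟩

end Mycielskian

theorem Fin.last_notMem_image_castSucc {k : ℕ} (S : Set (Fin k)) :
    Fin.last k ∉ Fin.castSucc '' S := by
  rintro ⟨i, -, hi⟩
  exact Fin.castSucc_ne_last i hi

open Mycielskian in
theorem IsNLColoring.mycielskian {α : Type*} {G : SimpleGraph α} {k : ℕ} {c : α → Fin k}
    (hc : IsNLColoring G c) : IsNLColoring (mycielskian G) (coloring c) := by
  refine ⟨?proper, ?locating⟩
  case proper =>
    rintro (a | a | u) (b | b | v) hab <;>
      simp only [coloring_inl, coloring_shadow, coloring_apex, ne_eq,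
        Fin.castSucc_inj, Fin.castSucc_ne_last, (Fin.castSucc_ne_last _).symm,
        not_false_eq_true]
    all_goals first | exact hc.1 a b hab | exact hab.elim
  case locating =>
    have castSucc_image_inj := Set.image_injective.mpr (Fin.castSucc_injective k)
    rintro (a | a | u) (b | b | v) hne hcol <;>
      simp only [coloring_inl, coloring_shadow, coloring_apex, Fin.castSucc_inj,
        Fin.castSucc_ne_last, (Fin.castSucc_ne_last _).symm, coloring_image_neighborSet_inl,
        coloring_image_neighborSet_shadow] at hcol ⊢
    · exact fun h => hc.2 a b (fun hab => hne (hab ▸ rfl)) hcol (castSucc_image_inj h)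
    · exact fun h => Fin.last_notMem_image_castSucc _ (h ▸ Set.mem_insert _ _)
    · exact fun h => Fin.last_notMem_image_castSucc _ (h ▸ Set.mem_insert _ _)
    · intro h
      refine hc.2 a b (fun hab => hne (hab ▸ rfl)) hcol (castSucc_image_inj ?_)
      rw [← Set.insert_sdiff_self_of_notMem (Fin.last_notMem_image_castSucc _), h,
        Set.insert_sdiff_self_of_notMem (Fin.last_notMem_image_castSucc _)]
    · exact (hne rfl).elim

/-- For every finite graph `G`, `χ_NL(μ(G)) ≤ χ_NL(G) + 1`. -/
theorem nlChromaticNumber_mycielskian_le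
    {α : Type*} [Fintype α] (G : SimpleGraph α) :
    nlChromaticNumber (mycielskian G) ≤ nlChromaticNumber G + 1 := by
  obtain ⟨c, hc⟩ := exists_isNLColoring_nlChromaticNumber G
  exact nlChromaticNumber_le_of_isNLColoring hc.mycielskian
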